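/- For every LTL_S formula ψ over AP there exists an LTL formula θ over AP that is equivalent to ψ, i.e., for every pointed trace (π,i), (π,i) ⊨ ψ if and only if (π,i) ⊨ θ. -/
import Mathlib


set_option linter.unusedVariables false

open Classical

/-- A trace over a set `AP` of atomic propositions: an infinite word over `2^AP`. -/
abbrev Trace (AP : Type) : Type := ℕ → Set AP

/-- Syntax of LTL formulas over `AP` (with `⊤`). -/
inductive LTL (AP : Type) : Type where
  | tt   : LTL AP
  | atom : AP → LTL AP
  | neg  : LTL AP → LTL AP
  | conj : LTL AP → LTL AP → LTL AP
  | next : LTL AP → LTL AP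
  | untl : LTL AP → LTL AP → LTL AP
deriving DecidableEq

namespace LTL

/-- Satisfaction of an LTL formula on a pointed trace. -/
def Sat {AP : Type} : LTL AP → Trace AP → ℕ → Prop
  | tt, _, _ => True
  | atom p, π, i => p ∈ π i
  | neg θ, π, i => ¬ Sat θ π i
  | conj θ₁ θ₂, π, i => Sat θ₁ π i ∧ Sat θ₂ π i
  | next θ, π, i => Sat θ π (i + 1)
  | untl θ₁ θ₂, π, i => ∃ j, i ≤ j ∧ Sat θ₂ π j ∧ ∀ k, i ≤ k → k < j → Sat θ₁ π k

def or {AP : Type} (a b : LTL AP) : LTL AP := neg (conj (neg a) (neg b))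
def impl {AP : Type} (a b : LTL AP) : LTL AP := or (neg a) b
def iff {AP : Type} (a b : LTL AP) : LTL AP := conj (impl a b) (impl b a)
def ev {AP : Type} (a : LTL AP) : LTL AP := untl tt a
def alw {AP : Type} (a : LTL AP) : LTL AP := neg (ev (neg a))

def bigConj {AP : Type} : List (LTL AP) → LTL AP
  | [] => tt
  | θ :: l => conj θ (bigConj l)

def bigDisj {AP : Type} : List (LTL AP) → LTL AP
  | [] => neg tt
  | θ :: l => or θ (bigDisj l)

/-- The subformulas of an LTL formula. -/
def subf {AP : Type} [DecidableEq AP] : LTL AP → Finset (LTL AP)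
  | tt => {tt}
  | atom p => {atom p}
  | neg θ => insert (neg θ) (subf θ)
  | conj a b => insert (conj a b) (subf a ∪ subf b)
  | next θ => insert (next θ) (subf θ)
  | untl a b => insert (untl a b) (subf a ∪ subf b)

/-- Negation, identifying `¬¬θ` with `θ`. -/
def negId {AP : Type} : LTL AP → LTL AP
  | neg θ => θ
  | θ => neg θ

end LTL

/-- The closure of a finite set of LTL formulas: all subformulas and their
negations (identifying `¬¬θ` with `θ`). -/
def clOf {AP : Type} [DecidableEq AP] (Γ : Finset (LTL AP)) : Finset (LTL AP) :=
  (Γ.biUnion LTL.subf) ∪ (Γ.biUnion LTL.subf).image LTL.negId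

/-- Positions `h` and `k` of `π` disagree on the truth value of some formula of `Γ`. -/
def profDiff {AP : Type} (Γ : Set (LTL AP)) (π : Trace AP) (h k : ℕ) : Prop :=
  ∃ θ ∈ Γ, ¬ (LTL.Sat θ π h ↔ LTL.Sat θ π k)

/-- `IsStutterFact Γ π m f` : the increasing sequence of positions `f 0, f 1, …`
(of length `m + 1`, where `m ∈ ℕ∪{∞}`) is the Γ-stutter factorization of `π`:
`f 0 = 0`; the sequence is strictly increasing (below `m`); the truth value of every
formula of `Γ` is constant on each segment `[f j, f (j+1))` for `j < m` and on the
final infinite segment `[f m, ∞)` when `m` is finite; and between two adjacent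
segments the truth value of some formula of `Γ` changes. -/
def IsStutterFact {AP : Type} (Γ : Set (LTL AP)) (π : Trace AP) (m : ℕ∞) (f : ℕ → ℕ) : Prop :=
  f 0 = 0 ∧
  (∀ j : ℕ, (j : ℕ∞) < m → f j < f (j + 1)) ∧
  (∀ j : ℕ, (j : ℕ∞) < m → ∀ θ ∈ Γ, ∀ h k : ℕ,
      f j ≤ h → h < f (j + 1) → f j ≤ k → k < f (j + 1) →
      (LTL.Sat θ π h ↔ LTL.Sat θ π k)) ∧
  (∀ mf : ℕ, m = (mf : ℕ∞) → ∀ θ ∈ Γ, ∀ h k : ℕ,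
      f mf ≤ h → f mf ≤ k → (LTL.Sat θ π h ↔ LTL.Sat θ π k)) ∧
  (∀ j : ℕ, (j : ℕ∞) < m → ∃ θ ∈ Γ, (LTL.Sat θ π (f j) ↔ ¬ LTL.Sat θ π (f (j + 1))))

/-- The position component of the Γ-successor `succ_Γ(π, i)` of a pointed trace:
the first position of the segment (of the Γ-stutter factorization of `π`)
following the one containing `i`, if it exists, and `i + 1` otherwise. -/
noncomputable def succPos {AP : Type} (Γ : Set (LTL AP)) (π : Trace AP) (i : ℕ) : ℕ :=
  if h : ∃ j, i < j ∧ profDiff Γ π i j then Nat.find h else i + 1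

/-- The sequence of positions of `π` selected by the Γ-stutter trace of `π`. -/
noncomputable def stfrNth {AP : Type} (Γ : Set (LTL AP)) (π : Trace AP) : ℕ → ℕ
  | 0 => 0
  | k + 1 => succPos Γ π (stfrNth Γ π k)

/-- The Γ-stutter trace `stfr_Γ(π)` of `π`. -/
noncomputable def stfr {AP : Type} (Γ : Set (LTL AP)) (π : Trace AP) : Trace AP :=
  fun k => π (stfrNth Γ π k)

/-- Syntax of LTL_S: LTL with stutter-relativized temporal modalities. -/
inductive LTLS (AP : Type) : Type where
  | tt    : LTLS AP
  | atom  : AP → LTLS AP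
  | neg   : LTLS AP → LTLS AP
  | conj  : LTLS AP → LTLS AP → LTLS AP
  | nextR : Finset (LTL AP) → LTLS AP → LTLS AP
  | untlR : Finset (LTL AP) → LTLS AP → LTLS AP → LTLS AP

/-- Satisfaction of an LTL_S formula on a pointed trace. -/
def LTLS.Sat {AP : Type} : LTLS AP → Trace AP → ℕ → Prop
  | .tt, _, _ => True
  | .atom p, π, i => p ∈ π i
  | .neg ψ, π, i => ¬ LTLS.Sat ψ π i
  | .conj a b, π, i => LTLS.Sat a π i ∧ LTLS.Sat b π i
  | .nextR Γ ψ, π, i => LTLS.Sat ψ π (succPos (↑Γ) π i)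
  | .untlR Γ a b, π, i => ∃ j : ℕ,
      LTLS.Sat b π ((succPos (↑Γ : Set (LTL AP)) π)^[j] i) ∧
      ∀ k < j, LTLS.Sat a π ((succPos (↑Γ : Set (LTL AP)) π)^[k] i)

/-- A pointed trace assignment: maps each trace variable to a pointed trace. -/
abbrev PTA (AP V : Type) : Type := V → Trace AP × ℕ

/-- The Γ-successor of a pointed trace assignment. -/
noncomputable def succA {AP V : Type} (Γ : Set (LTL AP)) (Δ : PTA AP V) : PTA AP V :=
  fun x => ((Δ x).1, succPos Γ (Δ x).1 (Δ x).2)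

/-- Quantifier-free HyperLTL_S formulas over propositions `AP` and trace variables `V`. -/
inductive HSQF (AP V : Type) : Type where
  | tt    : HSQF AP V
  | atom  : AP → V → HSQF AP V
  | neg   : HSQF AP V → HSQF AP V
  | conj  : HSQF AP V → HSQF AP V → HSQF AP V
  | nextR : Finset (LTL AP) → HSQF AP V → HSQF AP V
  | untlR : Finset (LTL AP) → HSQF AP V → HSQF AP V → HSQF AP V

namespace HSQF

/-- Satisfaction of a quantifier-free HyperLTL_S formula on a pointed trace assignment. -/
def Sat {AP V : Type} : HSQF AP V → PTA AP V → Prop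
  | tt, _ => True
  | atom p x, Δ => p ∈ (Δ x).1 (Δ x).2
  | neg ψ, Δ => ¬ Sat ψ Δ
  | conj a b, Δ => Sat a Δ ∧ Sat b Δ
  | nextR Γ ψ, Δ => Sat ψ (succA (↑Γ) Δ)
  | untlR Γ a b, Δ => ∃ i : ℕ,
      Sat b ((succA (↑Γ : Set (LTL AP)))^[i] Δ) ∧
      ∀ k < i, Sat a ((succA (↑Γ : Set (LTL AP)))^[k] Δ)

/-- Trace variables occurring in a quantifier-free HyperLTL_S formula. -/
def vars {AP V : Type} : HSQF AP V → Set V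
  | tt => ∅
  | atom _ x => {x}
  | neg ψ => vars ψ
  | conj a b => vars a ∪ vars b
  | nextR _ ψ => vars ψ
  | untlR _ a b => vars a ∪ vars b

/-- The subscripts of the temporal modalities occurring in a formula. -/
def subs {AP V : Type} : HSQF AP V → Set (Finset (LTL AP))
  | tt => ∅
  | atom _ _ => ∅
  | neg ψ => subs ψ
  | conj a b => subs a ∪ subs b
  | nextR Γ ψ => insert Γ (subs ψ)
  | untlR Γ a b => insert Γ (subs a ∪ subs b)

/-- `ψ` is in the fragment HyperLTL_S[Γ]: every modality subscript equals `Γ`. -/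
def InFragment {AP V : Type} (Γ : Finset (LTL AP)) (ψ : HSQF AP V) : Prop :=
  ∀ s ∈ ψ.subs, s = Γ

/-- `ψ` is a one-variable formula. -/
def OneVar {AP V : Type} (ψ : HSQF AP V) : Prop := ∃ x : V, ψ.vars ⊆ {x}

/-- Replace every modality subscript by `∅`, yielding a HyperLTL formula. -/
def toHLTL {AP V : Type} : HSQF AP V → HSQF AP V
  | tt => tt
  | atom p x => atom p x
  | neg ψ => neg (toHLTL ψ)
  | conj a b => conj (toHLTL a) (toHLTL b)
  | nextR _ ψ => nextR ∅ (toHLTL ψ)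
  | untlR _ a b => untlR ∅ (toHLTL a) (toHLTL b)

end HSQF

/-- Boolean combinations of formulas satisfying a base predicate. -/
inductive BoolCombOf {AP V : Type} (P : HSQF AP V → Prop) : HSQF AP V → Prop
  | base {ψ} : P ψ → BoolCombOf P ψ
  | tt : BoolCombOf P .tt
  | neg {ψ} : BoolCombOf P ψ → BoolCombOf P (.neg ψ)
  | conj {a b} : BoolCombOf P a → BoolCombOf P b → BoolCombOf P (.conj a b)

/-- Trace quantifiers. -/
inductive Quant : Type where
  | ex  : Quant
  | all : Quant
deriving DecidableEq

/-- Satisfaction of a block of trace quantifiers followed by a matrix `P`,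
over a set `L` of traces, starting from the assignment `Δ`. -/
def SatPfx {AP V : Type} [DecidableEq V] (L : Set (Trace AP)) :
    List (Quant × V) → (PTA AP V → Prop) → PTA AP V → Prop
  | [], P, Δ => P Δ
  | (Quant.ex, x) :: qs, P, Δ => ∃ π ∈ L, SatPfx L qs P (Function.update Δ x (π, 0))
  | (Quant.all, x) :: qs, P, Δ => ∀ π ∈ L, SatPfx L qs P (Function.update Δ x (π, 0))

/-- A HyperLTL_S sentence: a quantifier prefix and a quantifier-free matrix. -/
structure HSSentence (AP V : Type) : Type where
  pre : List (Quant × V)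
  matrix : HSQF AP V

/-- The sentence is closed: quantified variables are pairwise distinct and
every trace variable of the matrix is bound by the prefix. -/
def HSSentence.Closed {AP V : Type} (φ : HSSentence AP V) : Prop :=
  (φ.pre.map Prod.snd).Nodup ∧ ∀ x ∈ φ.matrix.vars, x ∈ φ.pre.map Prod.snd

/-- `L ⊨ φ` for a HyperLTL_S sentence `φ` and a set `L` of traces. -/
def HSSentence.Models {AP V : Type} [DecidableEq V] (φ : HSSentence AP V)
    (L : Set (Trace AP)) : Prop :=
  ∀ Δ₀ : PTA AP V, SatPfx L φ.pre (fun Δ => φ.matrix.Sat Δ) Δ₀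

/-- A simple HyperLTL_S sentence: its matrix is a Boolean combination of
HyperLTL_S[Γ] formulas (for a common finite set `Γ` of LTL formulas) and of
one-variable quantifier-free formulas. -/
def HSSentence.Simple {AP V : Type} (φ : HSSentence AP V) : Prop :=
  ∃ Γ : Finset (LTL AP),
    BoolCombOf (fun ψ => ψ.InFragment Γ ∨ ψ.OneVar) φ.matrix

/-- A Kripke structure over `AP` with state type `S`. -/
structure Kripke (AP S : Type) : Type where
  init : Set S
  E : Set (S × S)
  total : ∀ s : S, ∃ t : S, (s, t) ∈ E
  V : S → Set AP

namespace Kripke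

/-- A path of a Kripke structure. -/
def IsPath {AP S : Type} (K : Kripke AP S) (ν : ℕ → S) : Prop :=
  ν 0 ∈ K.init ∧ ∀ i : ℕ, (ν i, ν (i + 1)) ∈ K.E

/-- The set of traces of a Kripke structure. -/
def Lang {AP S : Type} (K : Kripke AP S) : Set (Trace AP) :=
  {π | ∃ ν : ℕ → S, K.IsPath ν ∧ π = fun i => K.V (ν i)}

/-- The set of traces of `F`-fair paths of a Kripke structure. -/
def FairLang {AP S : Type} (K : Kripke AP S) (F : Set S) : Set (Trace AP) :=
  {π | ∃ ν : ℕ → S, K.IsPath ν ∧ (∀ N : ℕ, ∃ i, N ≤ i ∧ ν i ∈ F) ∧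
        π = fun i => K.V (ν i)}

end Kripke

/-- A finite Kripke structure over `AP` (states are `Fin n`). -/
structure FinKripke (AP : Type) : Type where
  n : ℕ
  K : Kripke AP (Fin n)

def FinKripke.Lang {AP : Type} (K : FinKripke AP) : Set (Trace AP) := K.K.Lang

def FinKripke.FairLang {AP : Type} (K : FinKripke AP) (F : Set (Fin K.n)) :
    Set (Trace AP) := K.K.FairLang F

/-- A nondeterministic Büchi automaton over alphabet `Sig` (finitely many states). -/
structure NBA (Sig : Type) : Type where
  n : ℕ
  init : Set (Fin n)
  trans : Set (Fin n × Sig × Fin n)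
  acc : Set (Fin n)

/-- The ω-language of an NBA. -/
def NBA.Lang {Sig : Type} (A : NBA Sig) : Set (ℕ → Sig) :=
  {w | ∃ ρ : ℕ → Fin A.n, ρ 0 ∈ A.init ∧ (∀ i : ℕ, (ρ i, w i, ρ (i + 1)) ∈ A.trans) ∧
        ∀ N : ℕ, ∃ i, N ≤ i ∧ ρ i ∈ A.acc}

/-- Positive Boolean formulas over `X`. -/
inductive PosBool (X : Type) : Type where
  | tt   : PosBool X
  | ff   : PosBool X
  | var  : X → PosBool X
  | por  : PosBool X → PosBool X → PosBool X
  | pand : PosBool X → PosBool X → PosBool X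

/-- Satisfaction of a positive Boolean formula by a set of variables. -/
def PosBool.SatBy {X : Type} (S : Set X) : PosBool X → Prop
  | .tt => True
  | .ff => False
  | .var x => x ∈ S
  | .por a b => a.SatBy S ∨ b.SatBy S
  | .pand a b => a.SatBy S ∧ b.SatBy S

/-- A Büchi alternating asynchronous word automaton with `m` directions (an `mAAWA`)
over alphabet `Sig`, with finitely many states. -/
structure AAWA (Sig : Type) (m : ℕ) : Type where
  n : ℕ
  init : Fin n
  trans : Fin n → (Fin m → Sig) → PosBool (Fin n × Fin m)
  acc : Set (Fin n)

/-- A run of an `mAAWA` over an `m`-tuple of infinite words: a `(Q × ℕ^m)`-labeled tree. -/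
structure AAWARun {Sig : Type} {m : ℕ} (A : AAWA Sig m) (w : Fin m → (ℕ → Sig)) : Type where
  T : Set (List ℕ)
  Lab : List ℕ → Fin A.n × (Fin m → ℕ)
  rootMem : [] ∈ T
  pclosed : ∀ τ ∈ T, ∀ σ : List ℕ, σ <+: τ → σ ∈ T
  rootLab : Lab [] = (A.init, fun _ => 0)
  step : ∀ τ ∈ T, ∃ (k : ℕ) (c : Fin k → Fin A.n × Fin m),
      (A.trans (Lab τ).1 (fun d => w d ((Lab τ).2 d))).SatBy (Set.range c) ∧
      (∀ j : ℕ, τ ++ [j] ∈ T ↔ j < k) ∧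
      ∀ j : Fin k, Lab (τ ++ [j.1]) =
        ((c j).1, fun d => if d = (c j).2 then (Lab τ).2 d + 1 else (Lab τ).2 d)

/-- The node of a branch at depth `i`. -/
def branchPrefix (b : ℕ → ℕ) (i : ℕ) : List ℕ := (List.range i).map b

/-- `b` describes an infinite branch of the run tree. -/
def AAWARun.IsBranch {Sig : Type} {m : ℕ} {A : AAWA Sig m} {w : Fin m → (ℕ → Sig)}
    (r : AAWARun A w) (b : ℕ → ℕ) : Prop :=
  ∀ i : ℕ, branchPrefix b i ∈ r.T

/-- A run is accepting if every infinite branch visits accepting states infinitely often. -/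
def AAWARun.Accepting {Sig : Type} {m : ℕ} {A : AAWA Sig m} {w : Fin m → (ℕ → Sig)}
    (r : AAWARun A w) : Prop :=
  ∀ b : ℕ → ℕ, r.IsBranch b → ∀ N : ℕ, ∃ i, N ≤ i ∧ (r.Lab (branchPrefix b i)).1 ∈ A.acc

/-- The language of an `mAAWA`: the `m`-tuples of infinite words admitting an accepting run. -/
def AAWA.Lang {Sig : Type} {m : ℕ} (A : AAWA Sig m) : Set (Fin m → (ℕ → Sig)) :=
  {w | ∃ r : AAWARun A w, r.Accepting}

/-- `A` is `k`-synchronous: in every run the reading heads stay within distance `k`. -/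
def AAWA.Synchronous {Sig : Type} {m : ℕ} (A : AAWA Sig m) (k : ℕ) : Prop :=
  ∀ (w : Fin m → (ℕ → Sig)) (r : AAWARun A w), ∀ τ ∈ r.T, ∀ d d' : Fin m,
    (r.Lab τ).2 d ≤ (r.Lab τ).2 d' + k

/-- Quantifier-free HyperLTL_C formulas over propositions `AP` and trace variables `V`:
HyperLTL extended with context modalities `⟨C⟩` for nonempty sets `C` of trace variables. -/
inductive HCQF (AP V : Type) : Type where
  | tt   : HCQF AP V
  | atom : AP → V → HCQF AP V
  | neg  : HCQF AP V → HCQF AP V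
  | conj : HCQF AP V → HCQF AP V → HCQF AP V
  | next : HCQF AP V → HCQF AP V
  | untl : HCQF AP V → HCQF AP V → HCQF AP V
  | ctx  : (C : Set V) → C.Nonempty → HCQF AP V → HCQF AP V

/-- `Δ +_C i` : advance by `i` the positions of the pointed traces assigned to
the variables in the context `C`, leaving the others unchanged. -/
noncomputable def shiftA {AP V : Type} (Δ : PTA AP V) (C : Set V) (i : ℕ) : PTA AP V :=
  fun x => if x ∈ C then ((Δ x).1, (Δ x).2 + i) else Δ x

namespace HCQF

/-- Satisfaction `(Δ, C) ⊨ ψ` of a quantifier-free HyperLTL_C formula. -/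
def Sat {AP V : Type} : HCQF AP V → PTA AP V → Set V → Prop
  | tt, _, _ => True
  | atom p x, Δ, _ => p ∈ (Δ x).1 (Δ x).2
  | neg ψ, Δ, C => ¬ Sat ψ Δ C
  | conj a b, Δ, C => Sat a Δ C ∧ Sat b Δ C
  | next ψ, Δ, C => Sat ψ (shiftA Δ C 1) C
  | untl a b, Δ, C => ∃ i : ℕ, Sat b (shiftA Δ C i) C ∧ ∀ k < i, Sat a (shiftA Δ C k) C
  | ctx C' _ ψ, Δ, _ => Sat ψ Δ C'

/-- Trace variables occurring in a quantifier-free HyperLTL_C formula. -/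
def vars {AP V : Type} : HCQF AP V → Set V
  | tt => ∅
  | atom _ x => {x}
  | neg ψ => vars ψ
  | conj a b => vars a ∪ vars b
  | next ψ => vars ψ
  | untl a b => vars a ∪ vars b
  | ctx _ _ ψ => vars ψ

/-- The set of subformulas of a quantifier-free HyperLTL_C formula. -/
def subf {AP V : Type} : HCQF AP V → Set (HCQF AP V)
  | tt => {tt}
  | atom p x => {atom p x}
  | neg ψ => insert (neg ψ) (subf ψ)
  | conj a b => insert (conj a b) (subf a ∪ subf b)
  | next ψ => insert (next ψ) (subf ψ)
  | untl a b => insert (untl a b) (subf a ∪ subf b)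
  | ctx C h ψ => insert (ctx C h ψ) (subf ψ)

/-- The size of a formula: its number of distinct subformulas. -/
noncomputable def size {AP V : Type} (ψ : HCQF AP V) : ℕ := ψ.subf.ncard

/-- Nesting depth of context modalities. -/
def ctxDepth {AP V : Type} : HCQF AP V → ℕ
  | tt => 0
  | atom _ _ => 0
  | neg ψ => ctxDepth ψ
  | conj a b => max (ctxDepth a) (ctxDepth b)
  | next ψ => ctxDepth ψ
  | untl a b => max (ctxDepth a) (ctxDepth b)
  | ctx _ _ ψ => ctxDepth ψ + 1

/-- Auxiliary predicate for the bounded fragment. `glob` is the set of all trace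
variables occurring in the formula of interest (a context `C` is global iff
`glob ⊆ C`); the flag records whether the current position is in the scope of a
non-global context modality, where only the temporal modality `X` is allowed. -/
def BoundedAux {AP V : Type} (glob : Set V) : Bool → HCQF AP V → Prop
  | _, tt => True
  | _, atom _ _ => True
  | t, neg ψ => BoundedAux glob t ψ
  | t, conj a b => BoundedAux glob t a ∧ BoundedAux glob t b
  | t, next ψ => BoundedAux glob t ψ
  | false, untl a b => BoundedAux glob false a ∧ BoundedAux glob false b
  | true, untl _ _ => False
  | t, ctx C _ ψ => (glob ⊆ C → BoundedAux glob false ψ) ∧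
                    (¬ glob ⊆ C → BoundedAux glob true ψ)

/-- `ψ` is bounded: the only temporal modality occurring in (the scope of) a
non-global context is the next modality `X`. -/
def IsBounded {AP V : Type} (ψ : HCQF AP V) : Prop := BoundedAux ψ.vars false ψ

/-- Auxiliary predicate for the fragment where each temporal modality occurring in
(the scope of) a non-global context is the eventually modality `F` (i.e. `⊤ U ·`). -/
def FOnlyAux {AP V : Type} (glob : Set V) : Bool → HCQF AP V → Prop
  | _, tt => True
  | _, atom _ _ => True
  | t, neg ψ => FOnlyAux glob t ψ
  | t, conj a b => FOnlyAux glob t a ∧ FOnlyAux glob t b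
  | false, next ψ => FOnlyAux glob false ψ
  | true, next _ => False
  | false, untl a b => FOnlyAux glob false a ∧ FOnlyAux glob false b
  | true, untl a b => a = tt ∧ FOnlyAux glob true b
  | t, ctx C _ ψ => (glob ⊆ C → FOnlyAux glob false ψ) ∧
                    (¬ glob ⊆ C → FOnlyAux glob true ψ)

/-- Every temporal modality occurring in the scope of a non-global context
modality is the eventually modality `F`. -/
def FOnlyInNonGlobal {AP V : Type} (glob : Set V) (ψ : HCQF AP V) : Prop :=
  FOnlyAux glob false ψ

end HCQF

/-- A HyperLTL_C sentence: a quantifier prefix and a quantifier-free matrix. -/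
structure HCSentence (AP V : Type) : Type where
  pre : List (Quant × V)
  matrix : HCQF AP V

/-- The sentence is closed: quantified variables are pairwise distinct and every
trace variable of the matrix is bound by the prefix. -/
def HCSentence.Closed {AP V : Type} (φ : HCSentence AP V) : Prop :=
  (φ.pre.map Prod.snd).Nodup ∧ ∀ x ∈ φ.matrix.vars, x ∈ φ.pre.map Prod.snd

/-- `L ⊨ φ` for a HyperLTL_C sentence `φ` and a set `L` of traces
(the matrix is evaluated in the global context `VAR`). -/
def HCSentence.Models {AP V : Type} [DecidableEq V] (φ : HCSentence AP V)
    (L : Set (Trace AP)) : Prop :=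
  ∀ Δ₀ : PTA AP V, SatPfx L φ.pre (fun Δ => φ.matrix.Sat Δ Set.univ) Δ₀

/-- An instance of Post's Correspondence Problem over the alphabet `A`:
`2 * n` nonempty finite words. -/
structure PCPInstance (A : Type) : Type where
  n : ℕ
  npos : 0 < n
  word : Fin 2 → Fin n → List A
  ne : ∀ (ℓ : Fin 2) (i : Fin n), word ℓ i ≠ []

/-- The PCP instance has a solution. -/
def PCPInstance.HasSolution {A : Type} (P : PCPInstance A) : Prop :=
  ∃ is : List (Fin P.n), is ≠ [] ∧
    (is.map (P.word 0)).flatten = (is.map (P.word 1)).flatten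

/-- Atomic propositions used in the PCP reduction:
`AP = Σ ∪ {#} ∪ {p₁,…,pₙ} ∪ {q₁,q₂}`. -/
inductive PCPAP (A : Type) (n : ℕ) : Type where
  | sym  : A → PCPAP A n
  | hash : PCPAP A n
  | pvar : Fin n → PCPAP A n
  | qvar : Fin 2 → PCPAP A n
deriving DecidableEq

/-- `[u, p_i, q_ℓ]` : the word `u` marked with `p_i` and `q_ℓ`, whose last letter is
additionally marked with `#`. -/
def markWord {A : Type} {n : ℕ} (i : Fin n) (ℓ : Fin 2) : List A → List (Set (PCPAP A n))
  | [] => []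
  | [a] => [{PCPAP.sym a, PCPAP.pvar i, PCPAP.qvar ℓ, PCPAP.hash}]
  | a :: b :: rest => ({PCPAP.sym a, PCPAP.pvar i, PCPAP.qvar ℓ} : Set (PCPAP A n)) ::
      markWord i ℓ (b :: rest)

/-- The trace consisting of the finite word `l` followed by the trace `tail`. -/
def listToTrace {A : Type} (l : List (Set A)) (tail : Trace A) : Trace A :=
  fun k => if h : k < l.length then l.get ⟨k, h⟩ else tail (k - l.length)

/-- The well-formed trace `π^ℓ_{i₁,…,i_k} = {#}·[u^ℓ_{i₁},p_{i₁},q_ℓ]⋯[u^ℓ_{i_k},p_{i_k},q_ℓ]·{#}^ω`. -/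
def wfTrace {A : Type} (P : PCPInstance A) (ℓ : Fin 2) (is : List (Fin P.n)) :
    Trace (PCPAP A P.n) :=
  listToTrace (({PCPAP.hash} : Set (PCPAP A P.n)) ::
      (is.map fun i => markWord i ℓ (P.word ℓ i)).flatten)
    (fun _ => {PCPAP.hash})

/-- A well-formed trace for the PCP instance `P`. -/
def IsWellFormed {A : Type} (P : PCPInstance A) (π : Trace (PCPAP A P.n)) : Prop :=
  ∃ (ℓ : Fin 2) (is : List (Fin P.n)), is ≠ [] ∧ π = wfTrace P ℓ is

/-- The set `Γ = {#, p₁, …, pₙ}` of atomic propositions. -/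
def pcpGammaProp (A : Type) (n : ℕ) : Set (PCPAP A n) :=
  {x | x = PCPAP.hash ∨ ∃ i : Fin n, x = PCPAP.pvar i}

/-- The set `Γ = {#, p₁, …, pₙ}` regarded as a set of LTL formulas. -/
def pcpGammaLTL (A : Type) (n : ℕ) : Set (LTL (PCPAP A n)) :=
  LTL.atom '' pcpGammaProp A n

/-- The set `Γ = {#, p₁, …, pₙ}` as a finite set of LTL formulas. -/
def pcpGammaFinset (A : Type) [DecidableEq A] (n : ℕ) : Finset (LTL (PCPAP A n)) :=
  insert (LTL.atom PCPAP.hash)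
    ((Finset.univ : Finset (Fin n)).image fun i => LTL.atom (PCPAP.pvar i))

/-- Instructions of a Minsky 2-counter machine. -/
inductive MOp : Type where
  | inc  : MOp
  | dec  : MOp
  | zero : MOp
deriving DecidableEq

/-- A Minsky 2-counter machine (locations are `Fin nQ`; no transition leaves the
halting location). -/
structure Minsky : Type where
  nQ : ℕ
  qinit : Fin nQ
  qhalt : Fin nQ
  trans : Set (Fin nQ × (MOp × Fin 2) × Fin nQ)
  halt_no_out : ∀ q op q', (q, op, q') ∈ trans → q ≠ qhalt

/-- The one-step relation between configurations of a Minsky machine. -/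
def Minsky.Step (M : Minsky) (c c' : Fin M.nQ × (Fin 2 → ℕ)) : Prop :=
  ∃ (op : MOp) (cnt : Fin 2), (c.1, (op, cnt), c'.1) ∈ M.trans ∧
    (∀ d : Fin 2, d ≠ cnt → c'.2 d = c.2 d) ∧
    (match op with
      | MOp.inc => c'.2 cnt = c.2 cnt + 1
      | MOp.dec => 0 < c.2 cnt ∧ c'.2 cnt + 1 = c.2 cnt
      | MOp.zero => c.2 cnt = 0 ∧ c'.2 cnt = 0)

/-- The machine halts: some computation from the initial configuration reaches the
halting location. -/
def Minsky.Halts (M : Minsky) : Prop :=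
  ∃ c : Fin M.nQ × (Fin 2 → ℕ),
    Relation.ReflTransGen M.Step (M.qinit, fun _ => 0) c ∧ c.1 = M.qhalt

/-- Projection of a trace over `AP ⊕ B` onto `AP`. -/
def projSum {AP B : Type} (w : Trace (AP ⊕ B)) : Trace AP :=
  fun i => {p | Sum.inl p ∈ w i}

/-- The proposition `at(θ)` associated with an LTL formula (`at(p) = p` for atoms). -/
def atProp {AP : Type} : LTL AP → AP ⊕ LTL AP
  | LTL.atom p => Sum.inl p
  | θ => Sum.inr θ

namespace LTLSAux

variable {AP : Type}

def Chg (Γ : Set (LTL AP)) (π : Trace AP) (r : ℕ) : Prop := profDiff Γ π r (r + 1)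

/-- `Mem' Γ π r` : position `r + 1` is in the range of iterates of `succPos` from
any earlier position. -/
def Mem' (Γ : Set (LTL AP)) (π : Trace AP) (r : ℕ) : Prop :=
  Chg Γ π r ∨ ∀ j, r + 1 ≤ j → ¬ Chg Γ π j

lemma not_profDiff_iff {Γ : Set (LTL AP)} {π : Trace AP} {h k : ℕ} :
    ¬ profDiff Γ π h k ↔ ∀ θ ∈ Γ, (LTL.Sat θ π h ↔ LTL.Sat θ π k) := by
  unfold profDiff; push_neg; rfl

lemma succPos_spec (Γ : Set (LTL AP)) (π : Trace AP) (i : ℕ) :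
    ∃ ℓ, succPos Γ π i = ℓ + 1 ∧ i ≤ ℓ ∧ Mem' Γ π ℓ ∧
      ∀ k, i ≤ k → k < ℓ → ¬ Mem' Γ π k := by
  unfold succPos
  split
  case isTrue h =>
    have hcspec := Nat.find_spec h
    set c := Nat.find h with hc
    have hic : i < c := hcspec.1
    have hagree : ∀ j, i ≤ j → j < c → ∀ θ ∈ Γ, (LTL.Sat θ π i ↔ LTL.Sat θ π j) := by
      intro j hij hjc
      rcases Nat.eq_or_lt_of_le hij with rfl | hij'
      · intro θ _; exact Iff.rfl
      · have hm := Nat.find_min h hjc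
        have : ¬ profDiff Γ π i j := by tauto
        exact not_profDiff_iff.mp this
    have hchg : Chg Γ π (c - 1) := by
      obtain ⟨θ, hθΓ, hne⟩ := hcspec.2
      refine ⟨θ, hθΓ, ?_⟩
      have e1 := hagree (c - 1) (by omega) (by omega) θ hθΓ
      have e2 : c - 1 + 1 = c := by omega
      rw [e2]; tauto
    refine ⟨c - 1, by omega, by omega, Or.inl hchg, ?_⟩
    intro k hik hk hmem
    rcases hmem with hck | hall
    · obtain ⟨θ, hθΓ, hne⟩ := hck
      have e1 := hagree k hik (by omega) θ hθΓ
      have e2 := hagree (k + 1) (by omega) (by omega) θ hθΓ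
      tauto
    · exact hall (c - 1) (by omega) hchg
  case isFalse h =>
    push_neg at h
    refine ⟨i, rfl, le_refl i, Or.inr ?_, by omega⟩
    intro j hj hchg
    obtain ⟨θ, hθΓ, hne⟩ := hchg
    have e1 := not_profDiff_iff.mp (h j (by omega)) θ hθΓ
    have e2 := not_profDiff_iff.mp (h (j + 1) (by omega)) θ hθΓ
    tauto

lemma succPos_eq {Γ : Set (LTL AP)} {π : Trace AP} {i ℓ : ℕ}
    (h1 : i ≤ ℓ) (h2 : Mem' Γ π ℓ) (h3 : ∀ k, i ≤ k → k < ℓ → ¬ Mem' Γ π k) :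
    succPos Γ π i = ℓ + 1 := by
  obtain ⟨ℓ', e, h1', h2', h3'⟩ := succPos_spec Γ π i
  have : ℓ = ℓ' := by
    by_contra hne
    rcases Nat.lt_or_ge ℓ ℓ' with hlt | hge
    · exact h3' ℓ h1 hlt h2
    · exact h3 ℓ' h1' (by omega) h2'
  omega

lemma lt_succPos (Γ : Set (LTL AP)) (π : Trace AP) (x : ℕ) : x < succPos Γ π x := by
  obtain ⟨ℓ, e, h1, _, _⟩ := succPos_spec Γ π x; omega

lemma le_iterate (Γ : Set (LTL AP)) (π : Trace AP) (i t : ℕ) :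
    i + t ≤ (succPos Γ π)^[t] i := by
  induction t with
  | zero => simp
  | succ t ih =>
    rw [Function.iterate_succ_apply']
    have := lt_succPos Γ π ((succPos Γ π)^[t] i)
    omega

lemma strictMono_iterate (Γ : Set (LTL AP)) (π : Trace AP) (i : ℕ) :
    StrictMono (fun t => (succPos Γ π)^[t] i) := by
  apply strictMono_nat_of_lt_succ
  intro t
  simp only [Function.iterate_succ_apply']
  exact lt_succPos Γ π _

lemma mem_range_iterate {Γ : Set (LTL AP)} {π : Trace AP} {i q : ℕ}
    (hq : i < q) (hm : Mem' Γ π (q - 1)) :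
    ∃ t, (succPos Γ π)^[t] i = q := by
  set g := fun t => (succPos Γ π)^[t] i with hg
  have hex : ∃ t, q ≤ g (t + 1) := by
    refine ⟨q, ?_⟩
    have := le_iterate Γ π i (q + 1)
    simp only [hg]; omega
  set t₀ := Nat.find hex with ht₀
  have hle : q ≤ g (t₀ + 1) := Nat.find_spec hex
  have hlt : g t₀ < q := by
    rcases Nat.eq_zero_or_pos t₀ with h0 | hpos
    · rw [h0]; exact hq
    · have := Nat.find_min hex (show t₀ - 1 < t₀ by omega)
      have e : t₀ - 1 + 1 = t₀ := by omega
      rw [e] at this; omega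
  refine ⟨t₀ + 1, ?_⟩
  obtain ⟨ℓ, e, h1, h2, h3⟩ := succPos_spec Γ π (g t₀)
  have e2 : g (t₀ + 1) = succPos Γ π (g t₀) := Function.iterate_succ_apply' _ _ _
  have : ¬ (q - 1 < ℓ) := by
    intro hc
    exact h3 (q - 1) (by omega) hc hm
  show g (t₀ + 1) = q
  omega

/-- LTL formula expressing `Chg` at the current position. -/
noncomputable def chgF (Γ : Finset (LTL AP)) : LTL AP :=
  LTL.bigDisj (Γ.toList.map fun θ => LTL.neg (LTL.iff θ (LTL.next θ)))

lemma sat_or {a b : LTL AP} {π : Trace AP} {i : ℕ} :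
    (LTL.or a b).Sat π i ↔ a.Sat π i ∨ b.Sat π i := by
  simp only [LTL.or, LTL.Sat]; tauto

lemma sat_bigDisj {l : List (LTL AP)} {π : Trace AP} {i : ℕ} :
    (LTL.bigDisj l).Sat π i ↔ ∃ θ ∈ l, θ.Sat π i := by
  induction l with
  | nil => simp [LTL.bigDisj, LTL.Sat]
  | cons θ l ih =>
    simp only [LTL.bigDisj, sat_or, ih, List.mem_cons]
    constructor
    · rintro (h | ⟨θ', hθ', hs⟩)
      · exact ⟨θ, Or.inl rfl, h⟩
      · exact ⟨θ', Or.inr hθ', hs⟩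
    · rintro ⟨θ', (rfl | hθ'), hs⟩
      · exact Or.inl hs
      · exact Or.inr ⟨θ', hθ', hs⟩

lemma sat_alw {a : LTL AP} {π : Trace AP} {i : ℕ} :
    (LTL.alw a).Sat π i ↔ ∀ j, i ≤ j → a.Sat π j := by
  simp only [LTL.alw, LTL.ev, LTL.Sat]
  constructor
  · intro h j hj
    by_contra hc
    exact h ⟨j, hj, hc, fun _ _ _ => trivial⟩
  · rintro h ⟨j, hj, hc, -⟩
    exact hc (h j hj)

lemma sat_chgF {Γ : Finset (LTL AP)} {π : Trace AP} {r : ℕ} :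
    (chgF Γ).Sat π r ↔ Chg (↑Γ) π r := by
  unfold chgF Chg profDiff
  rw [sat_bigDisj]
  constructor
  · rintro ⟨θ', hmem, hsat⟩
    simp only [List.mem_map, Finset.mem_toList] at hmem
    obtain ⟨θ, hθ, rfl⟩ := hmem
    refine ⟨θ, by simpa using hθ, ?_⟩
    simp only [LTL.iff, LTL.impl, LTL.or, LTL.Sat] at hsat
    tauto
  · rintro ⟨θ, hθ, hne⟩
    refine ⟨LTL.neg (LTL.iff θ (LTL.next θ)),
      List.mem_map.mpr ⟨θ, Finset.mem_toList.mpr (by simpa using hθ), rfl⟩, ?_⟩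
    simp only [LTL.iff, LTL.impl, LTL.or, LTL.Sat]
    tauto

/-- LTL formula expressing `Mem'` at the current position. -/
noncomputable def memF (Γ : Finset (LTL AP)) : LTL AP :=
  LTL.or (chgF Γ) (LTL.next (LTL.alw (LTL.neg (chgF Γ))))

lemma sat_memF {Γ : Finset (LTL AP)} {π : Trace AP} {r : ℕ} :
    (memF Γ).Sat π r ↔ Mem' (↑Γ) π r := by
  unfold memF Mem'
  rw [sat_or]
  have h2 : (LTL.next (LTL.alw (LTL.neg (chgF Γ)))).Sat π r ↔
      ∀ j, r + 1 ≤ j → ¬ Chg (↑Γ) π j := by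
    show (LTL.alw (LTL.neg (chgF Γ))).Sat π (r + 1) ↔ _
    rw [sat_alw]
    apply forall_congr'
    intro j
    apply imp_congr Iff.rfl
    show ¬ (chgF Γ).Sat π j ↔ _
    rw [sat_chgF]
  rw [sat_chgF, h2]

lemma sat_neg {a : LTL AP} {π : Trace AP} {i : ℕ} :
    (LTL.neg a).Sat π i ↔ ¬ a.Sat π i := by simp only [LTL.Sat]

lemma sat_conj {a b : LTL AP} {π : Trace AP} {i : ℕ} :
    (LTL.conj a b).Sat π i ↔ a.Sat π i ∧ b.Sat π i := by simp only [LTL.Sat]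

lemma sat_next {a : LTL AP} {π : Trace AP} {i : ℕ} :
    (LTL.next a).Sat π i ↔ a.Sat π (i + 1) := by simp only [LTL.Sat]

lemma sat_untl {a b : LTL AP} {π : Trace AP} {i : ℕ} :
    (LTL.untl a b).Sat π i ↔
      ∃ j, i ≤ j ∧ b.Sat π j ∧ ∀ k, i ≤ k → k < j → a.Sat π k := by
  simp only [LTL.Sat]

end LTLSAux

theorem stmt1 (AP : Type) [Fintype AP] (ψ : LTLS AP) :
    ∃ θ : LTL AP, ∀ (π : Trace AP) (i : ℕ), ψ.Sat π i ↔ θ.Sat π i := by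
  induction ψ with
  | tt => exact ⟨LTL.tt, fun π i => by simp [LTLS.Sat, LTL.Sat]⟩
  | atom p => exact ⟨LTL.atom p, fun π i => by simp [LTLS.Sat, LTL.Sat]⟩
  | neg ψ ih =>
    obtain ⟨θ, hθ⟩ := ih
    exact ⟨LTL.neg θ, fun π i => by simp [LTLS.Sat, LTL.Sat, hθ]⟩
  | conj a b iha ihb =>
    obtain ⟨θa, ha⟩ := iha
    obtain ⟨θb, hb⟩ := ihb
    exact ⟨LTL.conj θa θb, fun π i => by simp [LTLS.Sat, LTL.Sat, ha, hb]⟩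
  | nextR Γ ψ ih =>
    obtain ⟨θψ, hθψ⟩ := ih
    refine ⟨LTL.untl (LTL.neg (LTLSAux.memF Γ))
      (LTL.conj (LTLSAux.memF Γ) (LTL.next θψ)), fun π i => ?_⟩
    have hR : (LTL.untl (LTL.neg (LTLSAux.memF Γ))
        (LTL.conj (LTLSAux.memF Γ) (LTL.next θψ))).Sat π i ↔
        ∃ j, i ≤ j ∧ (LTLSAux.Mem' (↑Γ) π j ∧ θψ.Sat π (j + 1)) ∧
          ∀ k, i ≤ k → k < j → ¬ LTLSAux.Mem' (↑Γ) π k := by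
      rw [LTLSAux.sat_untl]
      refine exists_congr fun j => and_congr Iff.rfl (and_congr ?_ ?_)
      · rw [LTLSAux.sat_conj, LTLSAux.sat_next, LTLSAux.sat_memF]
      · refine forall_congr' fun k => imp_congr Iff.rfl (imp_congr Iff.rfl ?_)
        rw [LTLSAux.sat_neg, LTLSAux.sat_memF]
    rw [hR]
    show ψ.Sat π (succPos (↑Γ) π i) ↔ _
    rw [hθψ]
    constructor
    · intro hs
      obtain ⟨ℓ, e, h1, h2, h3⟩ := LTLSAux.succPos_spec (↑Γ) π i
      rw [e] at hs
      exact ⟨ℓ, h1, ⟨h2, hs⟩, h3⟩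
    · rintro ⟨j, hij, ⟨hm, hs⟩, hmin⟩
      rw [LTLSAux.succPos_eq hij hm hmin]
      exact hs
  | untlR Γ a b iha ihb =>
    obtain ⟨θa, ha⟩ := iha
    obtain ⟨θb, hb⟩ := ihb
    refine ⟨LTL.or θb (LTL.conj θa (LTL.untl
        (LTL.or (LTL.neg (LTLSAux.memF Γ)) (LTL.next θa))
        (LTL.conj (LTLSAux.memF Γ) (LTL.next θb)))), fun π i => ?_⟩
    set g : ℕ → ℕ := fun t => (succPos (↑Γ : Set (LTL AP)) π)^[t] i with hg
    have hmono : StrictMono g := LTLSAux.strictMono_iterate _ π i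
    have hg0 : g 0 = i := rfl
    have higt : ∀ t, i ≤ g t := fun t =>
      le_trans (Nat.le_add_right i t) (LTLSAux.le_iterate (↑Γ : Set (LTL AP)) π i t)
    have hstep : ∀ t, g (t + 1) = succPos (↑Γ) π (g t) := by
      intro t; exact Function.iterate_succ_apply' _ _ _
    -- RHS characterization
    have hR : (LTL.or θb (LTL.conj θa (LTL.untl
        (LTL.or (LTL.neg (LTLSAux.memF Γ)) (LTL.next θa))
        (LTL.conj (LTLSAux.memF Γ) (LTL.next θb))))).Sat π i ↔
        θb.Sat π i ∨ (θa.Sat π i ∧ ∃ j, i ≤ j ∧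
          (LTLSAux.Mem' (↑Γ) π j ∧ θb.Sat π (j + 1)) ∧
          ∀ k, i ≤ k → k < j → (LTLSAux.Mem' (↑Γ) π k → θa.Sat π (k + 1))) := by
      rw [LTLSAux.sat_or]
      apply or_congr Iff.rfl
      rw [LTLSAux.sat_conj]
      apply and_congr Iff.rfl
      rw [LTLSAux.sat_untl]
      refine exists_congr fun j => and_congr Iff.rfl (and_congr ?_ ?_)
      · rw [LTLSAux.sat_conj, LTLSAux.sat_next, LTLSAux.sat_memF]
      · refine forall_congr' fun k => imp_congr Iff.rfl (imp_congr Iff.rfl ?_)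
        rw [LTLSAux.sat_or, LTLSAux.sat_neg, LTLSAux.sat_next, LTLSAux.sat_memF]
        tauto
    rw [hR]
    show (∃ m, b.Sat π (g m) ∧ ∀ k < m, a.Sat π (g k)) ↔ _
    constructor
    · rintro ⟨m, hbm, ham⟩
      match m with
      | 0 => exact Or.inl ((hb π i).mp hbm)
      | t + 1 =>
        refine Or.inr ⟨(ha π i).mp (ham 0 (by omega)), ?_⟩
        set q := g (t + 1) with hq
        obtain ⟨ℓ, e, h1, h2, h3⟩ := LTLSAux.succPos_spec (↑Γ) π (g t)
        have heq : q = ℓ + 1 := by rw [hq, hstep]; exact e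
        have hiq : i < q := by
          have := higt t; omega
        refine ⟨q - 1, by omega, ⟨by rw [show q - 1 = ℓ by omega]; exact h2, ?_⟩, ?_⟩
        · rw [show q - 1 + 1 = q by omega]
          exact (hb π q).mp hbm
        · intro k hik hk hmk
          obtain ⟨s, hs⟩ := LTLSAux.mem_range_iterate (Γ := (↑Γ : Set (LTL AP))) (π := π) (i := i)
            (q := k + 1) (by omega) (by simpa using hmk)
          have hsg : g s = k + 1 := hs
          have hslt : s < t + 1 := by
            have : g s < g (t + 1) := by omega
            exact hmono.lt_iff_lt.mp this
          have := ham s hslt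
          rw [hsg] at this
          exact (ha π (k + 1)).mp this
    · rintro (hbi | ⟨hai, j, hij, ⟨hm, hbj⟩, hmin⟩)
      · exact ⟨0, (hb π i).mpr hbi, by omega⟩
      · obtain ⟨m, hmq⟩ := LTLSAux.mem_range_iterate (Γ := (↑Γ : Set (LTL AP))) (π := π) (i := i)
          (q := j + 1) (by omega) (by simpa using hm)
        have hmq' : g m = j + 1 := hmq
        refine ⟨m, ?_, ?_⟩
        · rw [hmq']; exact (hb π (j + 1)).mpr hbj
        · intro k hk
          match k with
          | 0 => exact (ha π i).mpr hai
          | s + 1 =>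
            obtain ⟨ℓ, e, h1, h2, h3⟩ := LTLSAux.succPos_spec (↑Γ) π (g s)
            have heq : g (s + 1) = ℓ + 1 := by rw [hstep]; exact e
            have hig : i < g (s + 1) := by have := higt s; omega
            have hlt : g (s + 1) < g m := hmono hk
            have := hmin ℓ (by omega) (by omega) h2
            rw [show ℓ + 1 = g (s + 1) by omega] at this
            exact (ha π (g (s + 1))).mpr this
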